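/- The linear maps Chat ∘ (id_V ⊗ Chat ⊗ id_V) ∘ (gamma ⊗ gamma) and q^{-6}([7]_q - 1) * Chat from V ⊗ V to K are equal. (This is relation (4.11) of Lemma 4.1.) -/

import Mathlib

set_option synthInstance.maxHeartbeats 400000
set_option maxHeartbeats 1000000

noncomputable section

open scoped TensorProduct BigOperators

/-- The base field `K = ℂ(q)`, the field of rational functions over `ℂ`. -/
abbrev K : Type := RatFunc ℂ

/-- The indeterminate `q ∈ ℂ(q)`. -/
noncomputable def q : K := RatFunc.X

/-- Index set `{1,2,3,0,-3,-2,-1}` for the basis of the 7-dimensional module `V`. -/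
inductive Idx : Type
  | p1 | p2 | p3 | z | m3 | m2 | m1
  deriving DecidableEq

instance : Fintype Idx :=
  ⟨{Idx.p1, Idx.p2, Idx.p3, Idx.z, Idx.m3, Idx.m2, Idx.m1}, fun x => by cases x <;> simp⟩

open Idx

/-- The standard 7-dimensional module `V = K⁷`. -/
abbrev V : Type := Idx → K

/-- The basis vectors `v_a` of `V`. -/
noncomputable def v (a : Idx) : V := Pi.single a 1

/-- Matrix units `E_{ab}` with `E_{ab} v_c = δ_{bc} v_a`. -/
noncomputable def Emat (a b : Idx) : Matrix Idx Idx K := Matrix.single a b 1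

/-- The operator `π(E₁)` on `V`. -/
noncomputable def piE1 : Module.End K V :=
  Matrix.toLin' (Emat p1 p2 + (q + q⁻¹) • Emat p3 z - (q + q⁻¹) • Emat z m3 - Emat m2 m1)

/-- The operator `π(E₂)` on `V`. -/
noncomputable def piE2 : Module.End K V := Matrix.toLin' (Emat p2 p3 - Emat m3 m2)

/-- The operator `π(F₁)` on `V`. -/
noncomputable def piF1 : Module.End K V :=
  Matrix.toLin' (Emat p2 p1 + Emat z p3 - Emat m3 z - Emat m1 m2)

/-- The operator `π(F₂)` on `V`. -/
noncomputable def piF2 : Module.End K V := Matrix.toLin' (Emat p3 p2 - Emat m2 m3)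

/-- The operator `π(K₁)` on `V`. -/
noncomputable def piK1 : Module.End K V :=
  Matrix.toLin' (q • Emat p1 p1 + q⁻¹ • Emat p2 p2 + q ^ 2 • Emat p3 p3 + Emat z z
    + q ^ (-2 : ℤ) • Emat m3 m3 + q • Emat m2 m2 + q⁻¹ • Emat m1 m1)

/-- The inverse operator `π(K₁)⁻¹` on `V`. -/
noncomputable def piK1inv : Module.End K V :=
  Matrix.toLin' (q⁻¹ • Emat p1 p1 + q • Emat p2 p2 + q ^ (-2 : ℤ) • Emat p3 p3 + Emat z z
    + q ^ 2 • Emat m3 m3 + q⁻¹ • Emat m2 m2 + q • Emat m1 m1)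

/-- The operator `π(K₂)` on `V`. -/
noncomputable def piK2 : Module.End K V :=
  Matrix.toLin' (Emat p1 p1 + q ^ 3 • Emat p2 p2 + q ^ (-3 : ℤ) • Emat p3 p3 + Emat z z
    + q ^ 3 • Emat m3 m3 + q ^ (-3 : ℤ) • Emat m2 m2 + Emat m1 m1)

/-- The inverse operator `π(K₂)⁻¹` on `V`. -/
noncomputable def piK2inv : Module.End K V :=
  Matrix.toLin' (Emat p1 p1 + q ^ (-3 : ℤ) • Emat p2 p2 + q ^ 3 • Emat p3 p3 + Emat z z
    + q ^ (-3 : ℤ) • Emat m3 m3 + q ^ 3 • Emat m2 m2 + Emat m1 m1)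

/-- The coefficient table `φ_{ab} = (v_a, v_b)` of the invariant bilinear form on `V`. -/
noncomputable def phi : Idx → Idx → K
  | p1, m1 => q ^ 6
  | p2, m2 => q ^ 5
  | p3, m3 => q ^ 2
  | z, z => 1
  | m1, p1 => q ^ (-4 : ℤ)
  | m2, p2 => q ^ (-3 : ℤ)
  | m3, p3 => 1
  | _, _ => 0

/-- The vectors `b_a ∈ V ⊗ V` spanning the copy of `V = V_{λ₁}` inside `V ⊗ V`. -/
noncomputable def bvec : Idx → V ⊗[K] V
  | p1 => v p1 ⊗ₜ[K] v z - q ^ (-6 : ℤ) • (v z ⊗ₜ[K] v p1)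
      - (q ^ (-3 : ℤ) + q⁻¹) • (v p2 ⊗ₜ[K] v p3 - q ^ (-3 : ℤ) • (v p3 ⊗ₜ[K] v p2))
  | p2 => q ^ (-4 : ℤ) • (v z ⊗ₜ[K] v p2 - q ^ 2 • (v p2 ⊗ₜ[K] v z))
      - q⁻¹ • (v p1 ⊗ₜ[K] v m3) + q ^ (-6 : ℤ) • (v m3 ⊗ₜ[K] v p1)
  | p3 => q⁻¹ • (v p1 ⊗ₜ[K] v m2) - q ^ (-6 : ℤ) • (v m2 ⊗ₜ[K] v p1)
      - q ^ (-4 : ℤ) • (q ^ 2 • (v p3 ⊗ₜ[K] v z) - v z ⊗ₜ[K] v p3)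
  | z => q ^ (-6 : ℤ) • (v m1 ⊗ₜ[K] v p1) - q ^ (-2 : ℤ) • (v p1 ⊗ₜ[K] v m1)
      - (q ^ (-2 : ℤ) - q ^ (-4 : ℤ)) • (v z ⊗ₜ[K] v z)
      + q⁻¹ • (v p2 ⊗ₜ[K] v m2) - q ^ (-7 : ℤ) • (v m2 ⊗ₜ[K] v p2)
      + q ^ (-4 : ℤ) • (v p3 ⊗ₜ[K] v m3 - v m3 ⊗ₜ[K] v p3)
  | m3 => (q ^ (-2 : ℤ) * (1 + q ^ 2)) • (v p2 ⊗ₜ[K] v m1 - q ^ (-5 : ℤ) • (v m1 ⊗ₜ[K] v p2))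
      - q ^ (-4 : ℤ) • (q ^ 2 • (v z ⊗ₜ[K] v m3) - v m3 ⊗ₜ[K] v z)
  | m2 => q ^ (-4 : ℤ) • (v m2 ⊗ₜ[K] v z - q ^ 2 • (v z ⊗ₜ[K] v m2))
      - (q ^ (-2 : ℤ) * (1 + q ^ 2)) • (v p3 ⊗ₜ[K] v m1 - q ^ (-5 : ℤ) • (v m1 ⊗ₜ[K] v p3))
  | m1 => v z ⊗ₜ[K] v m1 - q ^ (-6 : ℤ) • (v m1 ⊗ₜ[K] v z)
      - q ^ (-2 : ℤ) • (v m3 ⊗ₜ[K] v m2 - q ^ (-3 : ℤ) • (v m2 ⊗ₜ[K] v m3))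

/-- The composite `Ĉ ∘ (id_V ⊗ Ĉ ⊗ id_V) : (V ⊗ V) ⊗ (V ⊗ V) → K` (with the canonical
associativity and unit identifications). -/
noncomputable def Fmap (Chat : (V ⊗[K] V) →ₗ[K] K) :
    ((V ⊗[K] V) ⊗[K] (V ⊗[K] V)) →ₗ[K] K :=
  Chat
    ∘ₗ TensorProduct.map (TensorProduct.rid K V).toLinearMap (LinearMap.id : V →ₗ[K] V)
    ∘ₗ TensorProduct.map
        (TensorProduct.map (LinearMap.id : V →ₗ[K] V) Chat) (LinearMap.id : V →ₗ[K] V)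
    ∘ₗ TensorProduct.map (TensorProduct.assoc K V V V).toLinearMap (LinearMap.id : V →ₗ[K] V)
    ∘ₗ (TensorProduct.assoc K (V ⊗[K] V) V V).symm.toLinearMap

/-! Since `Fmap Ĉ` contracts the two middle tensor factors and then the two outer ones, both
sides are determined by their values on pairs of basis tensors; expanding `b_a ⊗ b_b` turns each
of the 49 cases into an identity of Laurent polynomials in `q`. -/

open TensorProduct

lemma Fmap_tmul (C : (V ⊗[K] V) →ₗ[K] K) (x y z w : V) :
    Fmap C ((x ⊗ₜ[K] y) ⊗ₜ[K] (z ⊗ₜ[K] w)) = C (y ⊗ₜ[K] z) * C (x ⊗ₜ[K] w) := by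
  simp [Fmap, ← smul_tmul', smul_eq_mul]

lemma Fmap_bvec_tmul_bvec {C : (V ⊗[K] V) →ₗ[K] K} (hC : ∀ a b, C (v a ⊗ₜ[K] v b) = phi a b)
    (a b : Idx) :
    Fmap C (bvec a ⊗ₜ[K] bvec b) =
      q ^ (-6 : ℤ) * (q ^ 6 + q ^ 4 + q ^ 2 + q ^ (-2 : ℤ) + q ^ (-4 : ℤ) + q ^ (-6 : ℤ)) *
        phi a b := by
  have hq : q ≠ 0 := RatFunc.X_ne_zero
  cases a <;> cases b <;>
    simp only [bvec, tmul_sub, sub_tmul, tmul_add, add_tmul, tmul_smul, ← smul_tmul', map_sub,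
      map_add, map_smul, Fmap_tmul, hC, phi, smul_eq_mul, zpow_neg, zpow_ofNat] <;>
    field_simp <;> ring

/-- Lemma 4.1 (4.11): `Ĉ ∘ (id ⊗ Ĉ ⊗ id) ∘ (γ ⊗ γ) = q⁻⁶([7]_q - 1) Ĉ`
as linear maps `V ⊗ V → K`. -/
theorem Chat_gamma_gamma_relation :
    ∀ Chat : (V ⊗[K] V) →ₗ[K] K, (∀ a b : Idx, Chat (v a ⊗ₜ[K] v b) = phi a b) →
    ∀ gamma : V →ₗ[K] (V ⊗[K] V), (∀ a : Idx, gamma (v a) = bvec a) →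
      Fmap Chat ∘ₗ TensorProduct.map gamma gamma =
        (q ^ (-6 : ℤ) *
          (q ^ 6 + q ^ 4 + q ^ 2 + q ^ (-2 : ℤ) + q ^ (-4 : ℤ) + q ^ (-6 : ℤ))) • Chat := by
  intro C hC γ hγ
  refine ((Pi.basisFun K Idx).tensorProduct (Pi.basisFun K Idx)).ext fun ⟨a, b⟩ => ?_
  have hv (c : Idx) : Pi.basisFun K Idx c = v c := Pi.basisFun_apply K Idx c
  simp only [Module.Basis.tensorProduct_apply, hv, LinearMap.comp_apply, map_tmul, hγ,
    LinearMap.smul_apply, hC, smul_eq_mul]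
  exact Fmap_bvec_tmul_bvec hC a b

end
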